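/- (Gram inversion for shift-symmetric rotations.) Let ν be a conjugation-invariant Borel probability measure on SO(3), let M ∈ SO(3), let k ≥ 1, let V be a real 3×k matrix, let H = diag(1,1,0), and set τ₂ := ∫_{SO(3)} ((e⁽³⁾)ᵀ A e⁽³⁾)² dν(A). Then, with D := diag(√((1−τ₂)/2), √((1−τ₂)/2), √τ₂), the entrywise integral ∫_{SO(3)} (H A M V)ᵀ (H A M V) dν(A) equals Vᵀ Mᵀ (I − D²) M V = Vᵀ V − (D M V)ᵀ (D M V). (Here A ↦ A M is the law of a shift-symmetric random rotation P = R M with R distributed as ν, Gram(W) := WᵀW, and the identity expresses the expected Gram matrix of the planar projection H P V in terms of the Gram matrices of V and of D M V.) -/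

import Mathlib

open MeasureTheory Matrix
open scoped ENNReal

/-- Borel measurable structure on `3 × 3` real matrices (the product σ-algebra). -/
instance : MeasurableSpace (Matrix (Fin 3) (Fin 3) ℝ) :=
  inferInstanceAs (MeasurableSpace (Fin 3 → Fin 3 → ℝ))

/-- `SO(3)`: real orthogonal `3 × 3` matrices with determinant `1`. -/
def IsSO3 (A : Matrix (Fin 3) (Fin 3) ℝ) : Prop := A * Aᵀ = 1 ∧ A.det = 1

/-- `e⁽³⁾ = (0,0,1)ᵀ`. -/
def e3 : Fin 3 → ℝ := ![0, 0, 1]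

/-- A Borel probability measure on `SO(3)` is conjugation-invariant if it is invariant
under `A ↦ Qᵀ A Q` for every `Q ∈ SO(3)`. -/
def ConjInvariant (ν : Measure (Matrix (Fin 3) (Fin 3) ℝ)) : Prop :=
  ∀ Q, IsSO3 Q → Measure.map (fun A => Qᵀ * A * Q) ν = ν

/-!
For `A ∈ SO(3)` with last row `r` one has `Aᵀ H A = 1 - r rᵀ`, so the expected Gram matrix of
`H A M V` is `(M V)ᵀ (1 - S) (M V)` with `S = ∫ r rᵀ dν`. Conjugating by the quarter turn `Q`
about `e⁽³⁾` replaces `r` by `r Q`, so invariance of `ν` gives `Qᵀ S Q = S`. This forces `S` to be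
diagonal with equal first two entries, and `|r| = 1` gives `tr S = 1`; hence
`S = diag((1 - τ₂)/2, (1 - τ₂)/2, τ₂) = D²`.
-/

instance : BorelSpace (Matrix (Fin 3) (Fin 3) ℝ) :=
  inferInstanceAs (BorelSpace (Fin 3 → Fin 3 → ℝ))

namespace Matrix

variable {l m n o R : Type*}

theorem integral_mul_mul_apply [Fintype m] [Fintype n] {Ω : Type*} [MeasurableSpace Ω]
    {μ : Measure Ω} (X : Matrix l m ℝ) {C : Ω → Matrix m n ℝ} (Y : Matrix n o ℝ)
    (hC : ∀ i j, Integrable (fun ω => C ω i j) μ) (p : l) (q : o) :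
    ∫ ω, (X * C ω * Y) p q ∂μ = (X * of (fun i j => ∫ ω, C ω i j ∂μ) * Y) p q := by
  simp only [mul_apply, of_apply, Finset.sum_mul]
  rw [integral_finsetSum _ fun j _ => integrable_finsetSum _ fun i _ =>
    ((hC i j).const_mul _).mul_const _]
  refine Finset.sum_congr rfl fun j _ => ?_
  rw [integral_finsetSum _ fun i _ => ((hC i j).const_mul _).mul_const _]
  simp only [integral_mul_const, integral_const_mul]

theorem transpose_mul_vecMulVec_mul [Fintype m] [CommSemiring R] (Q : Matrix m n R)
    (x y : m → R) : Qᵀ * vecMulVec x y * Q = vecMulVec (x ᵥ* Q) (y ᵥ* Q) := by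
  rw [mul_vecMulVec, mulVec_transpose, vecMulVec_mul]

theorem transpose_mul_single_mul [Fintype m] [CommSemiring R] [DecidableEq m]
    (A : Matrix m n R) (i : m) : Aᵀ * single i i (1 : R) * A = vecMulVec (A i) (A i) := by
  rw [single_eq_single_vecMulVec_single, transpose_mul_vecMulVec_mul, single_one_vecMul]
  rfl

theorem transpose_mul_one_sub_mul_self_mul [Fintype n] [DecidableEq n] [CommRing R]
    {M D : Matrix n n R} (hM : Mᵀ * M = 1) (hD : Dᵀ = D) (V : Matrix n m R) :
    Vᵀ * Mᵀ * (1 - D * D) * M * V = Vᵀ * V - (D * M * V)ᵀ * (D * M * V) := by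
  simp only [transpose_mul, hD, Matrix.mul_sub, Matrix.sub_mul, Matrix.mul_one, Matrix.mul_assoc]
  rw [← Matrix.mul_assoc Mᵀ M V, hM, Matrix.one_mul]

theorem abs_apply_le_one_of_mul_transpose_eq_one [Fintype n] [DecidableEq n]
    {A : Matrix n n ℝ} (hA : A * Aᵀ = 1) (i j : n) : |A i j| ≤ 1 :=
  entry_norm_bound_of_unitary (U := A) (mem_unitaryGroup_iff.2 hA) i j

theorem sum_apply_mul_self_of_mul_transpose_eq_one [Fintype n] [DecidableEq n]
    {A : Matrix n n ℝ} (hA : A * Aᵀ = 1) (i : n) : ∑ j, A i j * A i j = 1 := by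
  simpa [mul_apply] using congrFun₂ hA i i

end Matrix

theorem e3_dotProduct_mulVec_e3 (A : Matrix (Fin 3) (Fin 3) ℝ) : e3 ⬝ᵥ A *ᵥ e3 = A 2 2 := by
  simp [e3, mulVec, dotProduct, Fin.sum_univ_three]

theorem transpose_mul_diagonal_mul_eq_one_sub_vecMulVec {A : Matrix (Fin 3) (Fin 3) ℝ}
    (hA : Aᵀ * A = 1) : Aᵀ * diagonal ![1, 1, 0] * A = 1 - vecMulVec (A 2) (A 2) := by
  have hH : (diagonal ![1, 1, 0] : Matrix (Fin 3) (Fin 3) ℝ) = 1 - single 2 2 1 := by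
    ext i j; fin_cases i <;> fin_cases j <;> simp
  rw [hH, Matrix.mul_sub, Matrix.sub_mul, Matrix.mul_one, hA, transpose_mul_single_mul]

theorem gram_diagonal_mul_mul {n : Type*} {A : Matrix (Fin 3) (Fin 3) ℝ} (hA : A * Aᵀ = 1)
    (W : Matrix (Fin 3) n ℝ) :
    (diagonal ![1, 1, 0] * A * W)ᵀ * (diagonal ![1, 1, 0] * A * W)
      = Wᵀ * (1 - vecMulVec (A 2) (A 2)) * W := by
  have hH : (diagonal ![1, 1, 0] : Matrix (Fin 3) (Fin 3) ℝ)ᵀ * diagonal ![1, 1, 0]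
      = diagonal ![1, 1, 0] := by
    ext i j; fin_cases i <;> fin_cases j <;> simp
  rw [← transpose_mul_diagonal_mul_eq_one_sub_vecMulVec (mul_eq_one_comm.1 hA)]
  simp only [transpose_mul, Matrix.mul_assoc]
  rw [← Matrix.mul_assoc (diagonal _)ᵀ, hH]

def quarterTurn : Matrix (Fin 3) (Fin 3) ℝ := !![0, -1, 0; 1, 0, 0; 0, 0, 1]

theorem isSO3_quarterTurn : IsSO3 quarterTurn := by
  constructor
  · ext i j; fin_cases i <;> fin_cases j <;> simp [quarterTurn, mul_apply, Fin.sum_univ_three]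
  · simp [quarterTurn, det_fin_three]

theorem conj_quarterTurn (S : Matrix (Fin 3) (Fin 3) ℝ) :
    quarterTurnᵀ * S * quarterTurn
      = !![S 1 1, -S 1 0, S 1 2; -S 0 1, S 0 0, -S 0 2; S 2 1, -S 2 0, S 2 2] := by
  ext i j; fin_cases i <;> fin_cases j <;> simp [quarterTurn, mul_apply, Fin.sum_univ_three]

theorem conj_quarterTurn_row_two (A : Matrix (Fin 3) (Fin 3) ℝ) :
    (quarterTurnᵀ * A * quarterTurn) 2 = A 2 ᵥ* quarterTurn := by
  ext j; fin_cases j <;> simp [quarterTurn, mul_apply, vecMul, dotProduct, Fin.sum_univ_three]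

theorem eq_diagonal_of_conj_quarterTurn {S : Matrix (Fin 3) (Fin 3) ℝ} (hS : Sᵀ = S)
    (hQ : quarterTurnᵀ * S * quarterTurn = S) : S = diagonal ![S 0 0, S 0 0, S 2 2] := by
  rw [conj_quarterTurn] at hQ
  have hsymm (i j : Fin 3) : S j i = S i j := congrFun₂ hS i j
  have h01 : -S 1 0 = S 0 1 := congrFun₂ hQ 0 1
  have h02 : S 1 2 = S 0 2 := congrFun₂ hQ 0 2
  have h11 : S 0 0 = S 1 1 := congrFun₂ hQ 1 1
  have h12 : -S 0 2 = S 1 2 := congrFun₂ hQ 1 2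
  ext i j
  fin_cases i <;> fin_cases j <;> simp <;> linarith [hsymm 0 1, hsymm 0 2, hsymm 1 2]

theorem measurable_conj (Q : Matrix (Fin 3) (Fin 3) ℝ) :
    Measurable fun A : Matrix (Fin 3) (Fin 3) ℝ => Qᵀ * A * Q :=
  ((continuous_const.matrix_mul continuous_id).matrix_mul continuous_const).measurable

theorem ConjInvariant.integral_comp_conj {ν : Measure (Matrix (Fin 3) (Fin 3) ℝ)}
    (hν : ConjInvariant ν) {Q : Matrix (Fin 3) (Fin 3) ℝ} (hQ : IsSO3 Q)
    {f : Matrix (Fin 3) (Fin 3) ℝ → ℝ} (hf : AEStronglyMeasurable f ν) :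
    ∫ A, f (Qᵀ * A * Q) ∂ν = ∫ A, f A ∂ν := by
  rw [← integral_map (measurable_conj Q).aemeasurable (by rwa [hν Q hQ]), hν Q hQ]

noncomputable def lastRowMoment (ν : Measure (Matrix (Fin 3) (Fin 3) ℝ)) :
    Matrix (Fin 3) (Fin 3) ℝ :=
  of fun i j => ∫ A, vecMulVec (A 2) (A 2) i j ∂ν

section lastRowMoment

variable {ν : Measure (Matrix (Fin 3) (Fin 3) ℝ)}

theorem lastRowMoment_transpose : (lastRowMoment ν)ᵀ = lastRowMoment ν := by
  ext i j; simp [lastRowMoment, vecMulVec_apply, mul_comm]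

theorem lastRowMoment_apply_self_nonneg (i : Fin 3) : 0 ≤ lastRowMoment ν i i :=
  integral_nonneg fun _ => mul_self_nonneg _

theorem integrable_vecMulVec_row [IsFiniteMeasure ν] (hν : ∀ᵐ A ∂ν, A * Aᵀ = 1)
    (r i j : Fin 3) : Integrable (fun A => vecMulVec (A r) (A r) i j) ν := by
  refine .of_bound (by fun_prop) 1 (hν.mono fun A hA => ?_)
  rw [vecMulVec_apply, Real.norm_eq_abs, abs_mul]
  exact mul_le_one₀ (abs_apply_le_one_of_mul_transpose_eq_one hA r i) (abs_nonneg _)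
    (abs_apply_le_one_of_mul_transpose_eq_one hA r j)

theorem integrable_one_sub_vecMulVec_row [IsFiniteMeasure ν] (hν : ∀ᵐ A ∂ν, A * Aᵀ = 1)
    (i j : Fin 3) :
    Integrable (fun A : Matrix (Fin 3) (Fin 3) ℝ => (1 - vecMulVec (A 2) (A 2)) i j) ν :=
  (integrable_const ((1 : Matrix (Fin 3) (Fin 3) ℝ) i j)).sub (integrable_vecMulVec_row hν 2 i j)

theorem integral_one_sub_vecMulVec_row [IsProbabilityMeasure ν] (hν : ∀ᵐ A ∂ν, A * Aᵀ = 1) :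
    of (fun i j => ∫ A, (1 - vecMulVec (A 2) (A 2)) i j ∂ν) = 1 - lastRowMoment ν := by
  ext i j
  refine (integral_sub (integrable_const _) (integrable_vecMulVec_row hν 2 i j)).trans ?_
  simp [lastRowMoment]

theorem trace_lastRowMoment [IsProbabilityMeasure ν] (hν : ∀ᵐ A ∂ν, A * Aᵀ = 1) :
    trace (lastRowMoment ν) = 1 := by
  simp only [trace, diag, lastRowMoment, of_apply]
  rw [← integral_finsetSum _ fun i _ => integrable_vecMulVec_row hν 2 i i,
    integral_congr_ae (g := fun _ => 1) (hν.mono fun A hA => by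
      simpa [vecMulVec_apply] using sum_apply_mul_self_of_mul_transpose_eq_one hA 2)]
  simp

theorem lastRowMoment_conj_quarterTurn [IsFiniteMeasure ν] (hν : ∀ᵐ A ∂ν, A * Aᵀ = 1)
    (hconj : ConjInvariant ν) :
    quarterTurnᵀ * lastRowMoment ν * quarterTurn = lastRowMoment ν := by
  ext i j
  rw [lastRowMoment, ← integral_mul_mul_apply _ _ (integrable_vecMulVec_row hν 2)]
  simp_rw [transpose_mul_vecMulVec_mul, ← conj_quarterTurn_row_two, of_apply]
  exact hconj.integral_comp_conj isSO3_quarterTurn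
    (f := fun A => vecMulVec (A 2) (A 2) i j) (by fun_prop)

theorem lastRowMoment_eq_diagonal [IsProbabilityMeasure ν] (hν : ∀ᵐ A ∂ν, A * Aᵀ = 1)
    (hconj : ConjInvariant ν) :
    lastRowMoment ν = diagonal ![(1 - lastRowMoment ν 2 2) / 2, (1 - lastRowMoment ν 2 2) / 2,
      lastRowMoment ν 2 2] := by
  have hdiag := eq_diagonal_of_conj_quarterTurn lastRowMoment_transpose
    (lastRowMoment_conj_quarterTurn hν hconj)
  have htrace : lastRowMoment ν 0 0 + lastRowMoment ν 0 0 + lastRowMoment ν 2 2 = 1 := by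
    have h := trace_lastRowMoment hν
    rwa [hdiag, trace_diagonal, Fin.sum_univ_three] at h
  have h00 : lastRowMoment ν 0 0 = (1 - lastRowMoment ν 2 2) / 2 := by linarith
  conv_lhs => rw [hdiag, h00]

end lastRowMoment

theorem gram_inversion
    (ν : Measure (Matrix (Fin 3) (Fin 3) ℝ)) [IsProbabilityMeasure ν]
    (hsupp : ν {A | ¬ IsSO3 A} = 0)
    (hconj : ConjInvariant ν)
    (M : Matrix (Fin 3) (Fin 3) ℝ) (hM : IsSO3 M)
    (k : ℕ) (V : Matrix (Fin 3) (Fin k) ℝ) :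
    let H : Matrix (Fin 3) (Fin 3) ℝ := Matrix.diagonal ![1, 1, 0]
    let τ₂ : ℝ := ∫ A, (e3 ⬝ᵥ A.mulVec e3) ^ 2 ∂ν
    let D : Matrix (Fin 3) (Fin 3) ℝ :=
      Matrix.diagonal ![Real.sqrt ((1 - τ₂) / 2), Real.sqrt ((1 - τ₂) / 2), Real.sqrt τ₂]
    (Matrix.of fun p q => ∫ A, ((H * A * M * V)ᵀ * (H * A * M * V)) p q ∂ν)
        = Vᵀ * Mᵀ * (1 - D * D) * M * V ∧
      Vᵀ * Mᵀ * (1 - D * D) * M * V = Vᵀ * V - (D * M * V)ᵀ * (D * M * V) := by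
  intro H τ₂ D
  have hν : ∀ᵐ A ∂ν, A * Aᵀ = 1 := (ae_iff.2 hsupp).mono fun A hA => hA.1
  have hτ₂ : τ₂ = lastRowMoment ν 2 2 := by
    simp [τ₂, lastRowMoment, e3_dotProduct_mulVec_e3, vecMulVec_apply, sq]
  have hS := lastRowMoment_eq_diagonal hν hconj
  rw [← hτ₂] at hS
  have hDD : D * D = lastRowMoment ν := by
    have h0 : 0 ≤ (1 - τ₂) / 2 := by
      simpa [hS] using lastRowMoment_apply_self_nonneg (ν := ν) 0
    have h2 : 0 ≤ τ₂ := hτ₂ ▸ lastRowMoment_apply_self_nonneg 2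
    rw [hS, diagonal_mul_diagonal]
    congr 1; ext i; fin_cases i
    exacts [Real.mul_self_sqrt h0, Real.mul_self_sqrt h0, Real.mul_self_sqrt h2]
  refine ⟨?_, transpose_mul_one_sub_mul_self_mul (mul_eq_one_comm.1 hM.1) (diagonal_transpose _) V⟩
  ext p q
  rw [of_apply, integral_congr_ae (hν.mono fun A hA => by
    rw [Matrix.mul_assoc _ M V, gram_diagonal_mul_mul hA])]
  refine (integral_mul_mul_apply _ _ (integrable_one_sub_vecMulVec_row hν) p q).trans ?_
  rw [integral_one_sub_vecMulVec_row hν, ← hDD]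
  simp only [transpose_mul, Matrix.mul_assoc]
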